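/- arXiv:1807.07193 — 5 statements merged into one kernel-verified Lean document; each statement's English description precedes it below -/
import Mathlib

section
/- If G is a finite simple graph on n vertices, then FCC(G) = n − FCP(G), i.e., the optimal value of the minimum fractional clique cover LP equals n minus the optimal value of the maximum fractional clique packing LP. -/
open Finset

variable {V : Type} [Fintype V] [DecidableEq V]

/-- Fractional vertex cover LP value. -/
noncomputable def FVC (G : SimpleGraph V) : ℝ :=
  sInf {s : ℝ | ∃ x : V → ℝ, (∀ v, 0 ≤ x v ∧ x v ≤ 1) ∧
    (∀ u v, G.Adj u v → 1 ≤ x u + x v) ∧ s = ∑ v, x v}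

/-- Fractional matching LP value. -/
noncomputable def FMM (G : SimpleGraph V) [DecidableRel G.Adj] : ℝ :=
  sSup {s : ℝ | ∃ y : Sym2 V → ℝ, (∀ e, 0 ≤ y e ∧ y e ≤ 1) ∧
    (∀ v : V, ∑ e ∈ G.edgeFinset, (if v ∈ e then y e else 0) ≤ 1) ∧
    s = ∑ e ∈ G.edgeFinset, y e}

/-- Fractional clique packing LP value. -/
noncomputable def FCP (G : SimpleGraph V) : ℝ :=
  sSup {s : ℝ | ∃ x : Finset V → ℝ, (∀ C, 0 ≤ x C ∧ x C ≤ 1) ∧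
    (∀ C : Finset V, ¬ G.IsClique (C : Set V) → x C = 0) ∧
    (∀ v : V, ∑ C : Finset V, (if v ∈ C then x C else 0) ≤ 1) ∧
    s = ∑ C : Finset V, x C * ((C.card : ℝ) - 1)}

/-- Fractional clique cover LP value. -/
noncomputable def FCC (G : SimpleGraph V) : ℝ :=
  sInf {s : ℝ | ∃ y : Finset V → ℝ, (∀ C, 0 ≤ y C ∧ y C ≤ 1) ∧
    (∀ C : Finset V, ¬ G.IsClique (C : Set V) → y C = 0) ∧
    (∀ v : V, 1 ≤ ∑ C : Finset V, (if v ∈ C then y C else 0)) ∧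
    s = ∑ C : Finset V, y C}

/-- Maximum independent set size. -/
noncomputable def alphaNum (G : SimpleGraph V) : ℕ :=
  sSup {k : ℕ | ∃ S : Finset V,
    ((S : Set V).Pairwise fun u v => ¬ G.Adj u v) ∧ S.card = k}

/-- Clique number. -/
noncomputable def cliqueNum (G : SimpleGraph V) : ℕ :=
  sSup {k : ℕ | ∃ C : Finset V, G.IsNClique k C}

/-- Edge-and-small-clique constrained fractional independent set LP value `α_{Fk}`. -/
noncomputable def alphaF (G : SimpleGraph V) (k : ℕ) : ℝ :=
  sSup {s : ℝ | ∃ x : V → ℝ, (∀ v, 0 ≤ x v ∧ x v ≤ 1) ∧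
    (∀ C : Finset V, G.IsClique (C : Set V) → C.card ≤ k → ∑ v ∈ C, x v ≤ 1) ∧
    s = ∑ v, x v}

/-- Minimum vertex cover size. -/
noncomputable def VC (G : SimpleGraph V) : ℕ :=
  sInf {k : ℕ | ∃ S : Finset V,
    (∀ u v, G.Adj u v → u ∈ S ∨ v ∈ S) ∧ S.card = k}

/-- Storage capacity. -/
noncomputable def Cap (G : SimpleGraph V) : ℝ :=
  sSup {x : ℝ | ∃ q : ℕ, 2 ≤ q ∧ ∃ C : Finset (V → Fin q),
    (∀ v : V, ∃ f : ({u : V // G.Adj v u} → Fin q) → Fin q,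
      ∀ c ∈ C, f (fun u => c u.1) = c v) ∧
    x = Real.logb q C.card}

/-- Index coding broadcast rate over alphabet of size `q`. -/
noncomputable def IndQ (G : SimpleGraph V) (q : ℕ) : ℕ :=
  sInf {l : ℕ | ∃ f : (V → Fin q) → (Fin l → Fin q), ∀ v : V,
    ∃ g : (Fin l → Fin q) → ({u : V // G.Adj v u} → Fin q) → Fin q,
      ∀ p : V → Fin q, g (f p) (fun u => p u.1) = p v}

/-- Index coding broadcast rate. -/
noncomputable def Ind (G : SimpleGraph V) : ℝ :=
  sInf {x : ℝ | ∃ q : ℕ, 2 ≤ q ∧ x = IndQ G q}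

/-!
For weights `y` on vertex sets write `load y v = ∑_{C ∋ v} y C`; double counting gives
`∑_C y C (|C| - 1) = ∑_v load y v - ∑_C y C`. A packing `x` becomes a cover of total weight
`n - ∑_C x C (|C| - 1)` by adding weight `1 - load x v` on each singleton `{v}`. Conversely, a
cover is made exact (load one everywhere) without changing its total weight: at each vertex `v` in
turn, move the fraction `1 - 1 / load y v` of the weight of every clique `C` to `C.erase v`, which
divides the load at `v` by `load y v` and leaves the other loads alone. An exact cover with the
weight of the empty set removed is a packing of value at least `n - ∑_C y C`.
-/

lemma csInf_eq_sub_csSup {A P : Set ℝ} (n : ℝ) (hP : P.Nonempty) (hP_bdd : BddAbove P)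
    (hPA : ∀ s ∈ P, n - s ∈ A) (hAP : ∀ t ∈ A, ∃ s ∈ P, n - t ≤ s) :
    sInf A = n - sSup P := by
  have hlower : ∀ t ∈ A, n - sSup P ≤ t := fun t ht => by
    obtain ⟨s, hs, hts⟩ := hAP t ht
    linarith [le_csSup hP_bdd hs]
  refine le_antisymm ?_ (le_csInf (hP.image (n - ·) |>.mono ?_) hlower)
  · have : sSup P ≤ n - sInf A :=
      csSup_le hP fun s hs => by linarith [csInf_le ⟨_, hlower⟩ (hPA s hs)]
    linarith
  · rintro _ ⟨s, hs, rfl⟩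
    exact hPA s hs

noncomputable def load (y : Finset V → ℝ) (v : V) : ℝ :=
  ∑ C : Finset V, if v ∈ C then y C else 0

lemma le_load {y : Finset V → ℝ} (hy : ∀ C, 0 ≤ y C) {v : V} {C : Finset V} (hv : v ∈ C) :
    y C ≤ load y v := by
  unfold load
  simpa [hv] using single_le_sum (f := fun D => if v ∈ D then y D else 0)
    (fun D _ => by split_ifs <;> simp [hy D]) (mem_univ C)

lemma load_add (x y : Finset V → ℝ) (v : V) : load (x + y) v = load x v + load y v := by
  simp only [load, Pi.add_apply, ← sum_add_distrib]
  exact sum_congr rfl fun C _ => by split_ifs <;> simp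

lemma load_smul (c : ℝ) (y : Finset V → ℝ) (v : V) : load (c • y) v = c * load y v := by
  simp only [load, Pi.smul_apply, smul_eq_mul, mul_sum]
  exact sum_congr rfl fun C _ => by split_ifs <;> simp

lemma sum_load (y : Finset V → ℝ) : ∑ v, load y v = ∑ C, y C * C.card := by
  simp only [load]
  rw [sum_comm]
  simp [sum_ite_mem, mul_comm]

lemma sum_mul_card_sub_one (y : Finset V → ℝ) :
    ∑ C, y C * ((C.card : ℝ) - 1) = ∑ v, load y v - ∑ C, y C := by
  simp [sum_load, mul_sub, sum_sub_distrib]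

noncomputable def pushforward {α : Type} [Fintype α] (g : α → Finset V) (y : α → ℝ)
    (D : Finset V) : ℝ :=
  ∑ a, if g a = D then y a else 0

section pushforward

variable {α : Type} [Fintype α] (g : α → Finset V) (y : α → ℝ)

lemma load_pushforward (w : V) :
    load (pushforward g y) w = ∑ a, if w ∈ g a then y a else 0 := by
  calc load (pushforward g y) w
      = ∑ D, ∑ a, if g a = D then (if w ∈ D then y a else 0) else 0 :=
        sum_congr rfl fun D _ => by unfold pushforward; split_ifs <;> simp
    _ = _ := by rw [sum_comm]; simp

lemma sum_pushforward : ∑ D, pushforward g y D = ∑ a, y a := by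
  unfold pushforward
  rw [sum_comm]
  simp

omit [Fintype V] in
lemma pushforward_nonneg {y : α → ℝ} (hy : ∀ a, 0 ≤ y a) (D : Finset V) :
    0 ≤ pushforward g y D :=
  sum_nonneg fun a _ => by split_ifs <;> simp [hy a]

omit [Fintype V] in
lemma pushforward_eq_zero {D : Finset V} (hD : ∀ a, g a = D → y a = 0) :
    pushforward g y D = 0 :=
  sum_eq_zero fun a _ => by split_ifs with h <;> simp [hD a, h]

end pushforward

structure IsCliqueWeighting (G : SimpleGraph V) (y : Finset V → ℝ) : Prop where
  nonneg : ∀ C, 0 ≤ y C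
  eq_zero_of_not_isClique : ∀ C : Finset V, ¬ G.IsClique (C : Set V) → y C = 0

structure IsFracCliquePacking (G : SimpleGraph V) (x : Finset V → ℝ) : Prop where
  mem_Icc : ∀ C, 0 ≤ x C ∧ x C ≤ 1
  eq_zero_of_not_isClique : ∀ C : Finset V, ¬ G.IsClique (C : Set V) → x C = 0
  load_le_one : ∀ v, load x v ≤ 1

structure IsFracCliqueCover (G : SimpleGraph V) (y : Finset V → ℝ) : Prop where
  mem_Icc : ∀ C, 0 ≤ y C ∧ y C ≤ 1
  eq_zero_of_not_isClique : ∀ C : Finset V, ¬ G.IsClique (C : Set V) → y C = 0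
  one_le_load : ∀ v, 1 ≤ load y v

noncomputable def shrinkAt (v : V) (c : ℝ) (y : Finset V → ℝ) : Finset V → ℝ :=
  c • y + (1 - c) • pushforward (·.erase v) y

lemma sum_shrinkAt (v : V) (c : ℝ) (y : Finset V → ℝ) :
    ∑ D, shrinkAt v c y D = ∑ D, y D := by
  simp only [shrinkAt, Pi.add_apply, Pi.smul_apply, smul_eq_mul, sum_add_distrib, ← mul_sum,
    sum_pushforward]
  ring

lemma load_shrinkAt_self (v : V) (c : ℝ) (y : Finset V → ℝ) :
    load (shrinkAt v c y) v = c * load y v := by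
  simp [shrinkAt, load_add, load_smul, load_pushforward]

lemma load_shrinkAt_of_ne {v w : V} (hwv : w ≠ v) (c : ℝ) (y : Finset V → ℝ) :
    load (shrinkAt v c y) w = load y w := by
  simp only [shrinkAt, load_add, load_smul, load_pushforward, mem_erase, hwv, ne_eq,
    not_false_eq_true, true_and]
  rw [load]
  ring

section

variable {G : SimpleGraph V}

lemma IsCliqueWeighting.shrinkAt {y : Finset V → ℝ}
    (hy : IsCliqueWeighting G y) (v : V) {c : ℝ} (hc₀ : 0 ≤ c) (hc₁ : c ≤ 1) :
    IsCliqueWeighting G (shrinkAt v c y) where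
  nonneg C := add_nonneg (mul_nonneg hc₀ (hy.nonneg C))
    (mul_nonneg (sub_nonneg.2 hc₁) (pushforward_nonneg _ hy.nonneg C))
  eq_zero_of_not_isClique D hD := by
    have hpush : pushforward (·.erase v) y D = 0 :=
      pushforward_eq_zero _ _ fun C hCD => hy.eq_zero_of_not_isClique C fun hC =>
        hD (hCD ▸ hC.subset (by simp))
    simp [_root_.shrinkAt, hpush, hy.eq_zero_of_not_isClique D hD]

lemma IsCliqueWeighting.exists_load_eq_one {y : Finset V → ℝ}
    (hy : IsCliqueWeighting G y) (hcov : ∀ v, 1 ≤ load y v) :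
    ∃ x, IsCliqueWeighting G x ∧ (∀ v, load x v = 1) ∧ ∑ C, x C = ∑ C, y C := by
  suffices ∀ S : Finset V, ∃ x, IsCliqueWeighting G x ∧
      (∀ v, load x v = if v ∈ S then 1 else load y v) ∧ ∑ C, x C = ∑ C, y C by
    obtain ⟨x, hx, hload, hsum⟩ := this univ
    exact ⟨x, hx, fun v => by simpa using hload v, hsum⟩
  intro S
  induction S using Finset.induction_on with
  | empty => exact ⟨y, hy, by simp, rfl⟩
  | insert v S hvS ih =>
    obtain ⟨x, hx, hload, hsum⟩ := ih
    have hxv : 1 ≤ load x v := by simpa [hload v, hvS] using hcov v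
    refine ⟨_root_.shrinkAt v (load x v)⁻¹ x, hx.shrinkAt v (by positivity)
      (inv_le_one_of_one_le₀ hxv), fun w => ?_, by rw [sum_shrinkAt, hsum]⟩
    by_cases hwv : w = v
    · subst hwv
      simp [load_shrinkAt_self, inv_mul_cancel₀ (by positivity : load x w ≠ 0)]
    · rw [load_shrinkAt_of_ne hwv, hload]
      simp [hwv]

lemma IsFracCliquePacking.sum_mul_card_sub_one_le {x : Finset V → ℝ}
    (hx : IsFracCliquePacking G x) :
    ∑ C, x C * ((C.card : ℝ) - 1) ≤ Fintype.card V := by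
  rw [sum_mul_card_sub_one]
  have hload : ∑ v, load x v ≤ Fintype.card V :=
    (sum_le_sum fun v _ => hx.load_le_one v).trans_eq (by simp)
  have hsum : 0 ≤ ∑ C, x C := sum_nonneg fun C _ => (hx.mem_Icc C).1
  linarith

lemma IsFracCliquePacking.exists_cover {x : Finset V → ℝ} (hx : IsFracCliquePacking G x) :
    ∃ y, IsFracCliqueCover G y ∧
      ∑ C, y C = Fintype.card V - ∑ C, x C * ((C.card : ℝ) - 1) := by
  set y := x + pushforward (fun u => {u}) (fun u => 1 - load x u)
  have hload : ∀ v, load y v = 1 := fun v => by simp [y, load_add, load_pushforward]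
  have hpad : ∀ C : Finset V, (∀ u, C ≠ {u}) → y C = x C := fun C hC => by
    simp [y, pushforward_eq_zero _ _ fun u h => absurd h.symm (hC u)]
  have hy₀ : ∀ C, 0 ≤ y C := fun C => add_nonneg (hx.mem_Icc C).1
    (pushforward_nonneg _ (fun u => sub_nonneg.2 (hx.load_le_one u)) C)
  refine ⟨y, ⟨fun C => ⟨hy₀ C, ?_⟩, fun C hC => ?_, fun v => (hload v).ge⟩, ?_⟩
  · obtain rfl | ⟨v, hv⟩ := C.eq_empty_or_nonempty
    · rw [hpad ∅ fun u => (singleton_ne_empty u).symm]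
      exact (hx.mem_Icc ∅).2
    · exact (le_load hy₀ hv).trans (hload v).le
  · rw [hpad C fun u h => hC (h ▸ by simp), hx.eq_zero_of_not_isClique C hC]
  · rw [sum_mul_card_sub_one]
    simp [y, sum_add_distrib, sum_pushforward, sum_sub_distrib]
    ring

lemma IsFracCliqueCover.exists_packing {y : Finset V → ℝ} (hy : IsFracCliqueCover G y) :
    ∃ x, IsFracCliquePacking G x ∧
      Fintype.card V - ∑ C, y C ≤ ∑ C, x C * ((C.card : ℝ) - 1) := by
  obtain ⟨z, hz, hzload, hzsum⟩ :=
    IsCliqueWeighting.exists_load_eq_one ⟨fun C => (hy.mem_Icc C).1, hy.eq_zero_of_not_isClique⟩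
      hy.one_le_load
  set x : Finset V → ℝ := fun C => if C.Nonempty then z C else 0
  have hload : ∀ v, load x v = 1 := fun v => by
    rw [← hzload v]
    refine sum_congr rfl fun C _ => ?_
    by_cases hv : v ∈ C
    · simp [x, hv, show C.Nonempty from ⟨v, hv⟩]
    · simp [hv]
  refine ⟨x, ⟨fun C => ⟨?_, ?_⟩, fun C hC => ?_, fun v => (hload v).le⟩, ?_⟩
  · simp only [x]
    split_ifs <;> simp [hz.nonneg C]
  · simp only [x]
    split_ifs with hC
    · obtain ⟨v, hv⟩ := hC
      exact (le_load hz.nonneg hv).trans (hzload v).le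
    · exact zero_le_one
  · simp [x, hz.eq_zero_of_not_isClique C hC]
  · calc Fintype.card V - ∑ C, y C = ∑ C, z C * ((C.card : ℝ) - 1) := by
          simp [sum_mul_card_sub_one, hzload, hzsum]
      _ ≤ _ := sum_le_sum fun C _ => by
          obtain rfl | hC := C.eq_empty_or_nonempty
          · simp [x, hz.nonneg ∅]
          · simp [x, hC]
end

/-- `FCC(G) = n - FCP(G)`. -/
theorem stmt1 (G : SimpleGraph V) : FCC G = (Fintype.card V : ℝ) - FCP G := by
  refine csInf_eq_sub_csSup _ ⟨0, fun _ => 0, by simp, by simp, by simp, by simp⟩ ?_ ?_ ?_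
  · refine ⟨Fintype.card V, ?_⟩
    rintro _ ⟨x, h₁, h₂, h₃, rfl⟩
    exact IsFracCliquePacking.sum_mul_card_sub_one_le ⟨h₁, h₂, h₃⟩
  · rintro _ ⟨x, h₁, h₂, h₃, rfl⟩
    obtain ⟨y, hy, hsum⟩ := IsFracCliquePacking.exists_cover ⟨h₁, h₂, h₃⟩
    exact ⟨y, hy.mem_Icc, hy.eq_zero_of_not_isClique, hy.one_le_load, hsum.symm⟩
  · rintro _ ⟨y, h₁, h₂, h₃, rfl⟩
    obtain ⟨x, hx, hval⟩ := IsFracCliqueCover.exists_packing ⟨h₁, h₂, h₃⟩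
    exact ⟨_, ⟨x, hx.mem_Icc, hx.eq_zero_of_not_isClique, hx.load_le_one, rfl⟩, hval⟩
end

section
/- Every half-integral fractional vertex cover of an l-colorable graph (l ≥ 2) can be rounded to an integral vertex cover of size at most (2l−2)/l times the fractional cover's value. Consequently, the integrality gap of vertex cover on l-colorable graphs is at most (2l−2)/l. -/
open Finset

variable {V : Type} [Fintype V] [DecidableEq V]

/-- Every half-integral fractional vertex cover of an `l`-colorable graph can be
rounded to an integral vertex cover of size at most `(2l-2)/l` times its value. -/
theorem stmt2 (G : SimpleGraph V) (l : ℕ) (hl : 2 ≤ l) (hcol : G.Colorable l)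
    (x : V → ℝ) (hhalf : ∀ v, x v = 0 ∨ x v = 1/2 ∨ x v = 1)
    (hcov : ∀ u v, G.Adj u v → 1 ≤ x u + x v) :
    ∃ S : Finset V, (∀ u v, G.Adj u v → u ∈ S ∨ v ∈ S) ∧
      (S.card : ℝ) ≤ ((2 * l - 2) / l) * ∑ v, x v := by
  classical
  obtain ⟨c⟩ := hcol
  have hl0 : (0:ℝ) < l := by positivity
  set V1 : Finset V := univ.filter (fun v => x v = 1) with hV1
  set H : Finset V := univ.filter (fun v => x v = 1/2) with hH
  have hcard : H.card = ∑ i : Fin l, (H.filter (fun v => c v = i)).card :=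
    Finset.card_eq_sum_card_fiberwise (fun v _ => Finset.mem_univ (c v))
  have hne : (Finset.univ : Finset (Fin l)).Nonempty := by
    have : 0 < l := by omega
    exact ⟨⟨0, this⟩, Finset.mem_univ _⟩
  have hex : ∃ i : Fin l, H.card ≤ l * (H.filter (fun v => c v = i)).card := by
    have hsum : ∑ _i : Fin l, H.card ≤ ∑ i : Fin l, l * (H.filter (fun v => c v = i)).card := by
      rw [← Finset.mul_sum, ← hcard, Finset.sum_const, Finset.card_univ, Fintype.card_fin,
        smul_eq_mul]
    obtain ⟨i, -, hi⟩ := Finset.exists_le_of_sum_le hne hsum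
    exact ⟨i, hi⟩
  obtain ⟨i, hi⟩ := hex
  set K : Finset V := H.filter (fun v => c v = i) with hK
  refine ⟨V1 ∪ (H \ K), ?_, ?_⟩
  · intro u v huv
    rcases hhalf u with hu | hu | hu
    · rcases hhalf v with hv | hv | hv
      · exfalso; have := hcov u v huv; rw [hu, hv] at this; norm_num at this
      · exfalso; have := hcov u v huv; rw [hu, hv] at this; norm_num at this
      · right; exact Finset.mem_union_left _ (by simp [hV1, hv])
    · rcases hhalf v with hv | hv | hv
      · exfalso; have := hcov u v huv; rw [hu, hv] at this; norm_num at this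
      · -- both 1/2
        have hcuv : c u ≠ c v := c.valid huv
        by_cases hcu : c u = i
        · right
          refine Finset.mem_union_right _ ?_
          simp only [hK, Finset.mem_sdiff, Finset.mem_filter]
          refine ⟨by simp [hH, hv], ?_⟩
          intro h
          exact hcuv (hcu.trans h.2.symm)
        · left
          refine Finset.mem_union_right _ ?_
          simp only [hK, Finset.mem_sdiff, Finset.mem_filter]
          exact ⟨by simp [hH, hu], fun h => hcu h.2⟩
      · right; exact Finset.mem_union_left _ (by simp [hV1, hv])
    · left; exact Finset.mem_union_left _ (by simp [hV1, hu])
  · have hKH : K ⊆ H := Finset.filter_subset _ _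
    have hcardS : (V1 ∪ (H \ K)).card ≤ V1.card + (H.card - K.card) := by
      calc (V1 ∪ (H \ K)).card ≤ V1.card + (H \ K).card := Finset.card_union_le _ _
      _ = V1.card + (H.card - K.card) := by rw [Finset.card_sdiff_of_subset hKH]
    have hsumx : ∑ v, x v = (V1.card : ℝ) + (H.card : ℝ) / 2 := by
      have hxv : ∀ v, x v = (if x v = 1 then (1:ℝ) else 0) + (if x v = 1/2 then 1/2 else 0) := by
        intro v
        rcases hhalf v with h | h | h <;> rw [h] <;> norm_num
      calc ∑ v, x v = ∑ v, ((if x v = 1 then (1:ℝ) else 0) + (if x v = 1/2 then 1/2 else 0)) := by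
            exact Finset.sum_congr rfl (fun v _ => hxv v)
      _ = ∑ v, (if x v = 1 then (1:ℝ) else 0) + ∑ v, (if x v = 1/2 then (1:ℝ)/2 else 0) :=
            Finset.sum_add_distrib
      _ = (V1.card : ℝ) + (H.card : ℝ) / 2 := by
            rw [← Finset.sum_filter, ← Finset.sum_filter]
            simp only [Finset.sum_const, nsmul_eq_mul, mul_one, hV1, hH]
            ring
    rw [hsumx]
    have hKcast : (K.card : ℝ) ≤ (H.card : ℝ) := by exact_mod_cast Finset.card_le_card hKH
    have hcast : ((V1 ∪ (H \ K)).card : ℝ) ≤ (V1.card : ℝ) + ((H.card : ℝ) - (K.card : ℝ)) := by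
      have := hcardS
      have h2 : ((V1.card + (H.card - K.card) : ℕ) : ℝ)
          = (V1.card : ℝ) + ((H.card : ℝ) - (K.card : ℝ)) := by
        push_cast [Nat.cast_sub (Finset.card_le_card hKH)]
        ring
      calc ((V1 ∪ (H \ K)).card : ℝ) ≤ ((V1.card + (H.card - K.card) : ℕ) : ℝ) := by
            exact_mod_cast this
      _ = _ := h2
    refine hcast.trans ?_
    have hiR : (H.card : ℝ) ≤ (l : ℝ) * (K.card : ℝ) := by exact_mod_cast hi
    have hlR : (2:ℝ) ≤ (l : ℝ) := by exact_mod_cast hl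
    rw [div_mul_eq_mul_div, le_div_iff₀ hl0]
    have hA : (0:ℝ) ≤ (V1.card : ℝ) := by positivity
    nlinarith [hA, hiR, hlR]
end

section
/- If G is a k-colorable graph with k ≥ 2, then α(G) ≥ (2/k) · α_{F2}(G), where α_{F2}(G) is the optimal value of the edge-constrained fractional independent set LP. -/
open Finset

variable {V : Type} [Fintype V] [DecidableEq V]

/-!
Given a feasible `x`, shift all coordinates outside `{0, 1/2, 1}` by the same amount, towards `1/2`
or away from it, whichever does not decrease `∑ x`, until one of them reaches `{0, 1/2, 1}`.
Repeating this gives a half-integral feasible `y` with `∑ x ≤ ∑ y`. For a `k`-colouring, the sets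
`{y = 1} ∪ {y = 1/2, colour i}` are independent, and together they cover every vertex with
`y = 1` exactly `k ≥ 2` times and every vertex with `y = 1/2` once, so one of them has at least
`2 ∑ y / k` elements.
-/

namespace SimpleGraph

variable {α : Type*} {G : SimpleGraph α} {x : α → ℝ}

def IsFracIndepSet (G : SimpleGraph α) (x : α → ℝ) : Prop :=
  (∀ v, x v ∈ Set.Icc (0 : ℝ) 1) ∧ ∀ u v, G.Adj u v → x u + x v ≤ 1

def halfValues : Set ℝ := {0, 1 / 2, 1}

open Classical in
noncomputable def towardHalf (x : α → ℝ) (v : α) : ℝ :=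
  if x v ∈ halfValues then 0 else if x v < 1 / 2 then 1 else -1

lemma towardHalf_of_mem {v : α} (h : x v ∈ halfValues) : towardHalf x v = 0 := by
  simp [towardHalf, h]

/-- Each shifted coordinate stays in whichever of `[0, 1 / 2]`, `[1 / 2, 1]` it started in, and an
edge joining the two open halves keeps its sum. -/
lemma IsFracIndepSet.add_smul_towardHalf (hx : G.IsFracIndepSet x) {ε : ℝ}
    (hε : ∀ v, x v ∉ halfValues → ε ≤ |x v - 1 / 2| ∧ -ε ≤ 1 / 2 - |x v - 1 / 2|) :
    G.IsFracIndepSet (x + ε • towardHalf x) := by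
  have hval : ∀ v, (x + ε • towardHalf x) v = x v + ε * towardHalf x v := fun v => rfl
  refine ⟨fun v => ?_, fun u v huv => ?_⟩
  · have hv := hx.1 v
    have hεv := hε v
    simp only [hval, towardHalf, halfValues, Set.mem_insert_iff, Set.mem_singleton_iff,
      Set.mem_Icc] at hv hεv ⊢
    split_ifs <;> grind
  · have hu := hx.1 u
    have hv := hx.1 v
    have huv := hx.2 u v huv
    have hεu := hε u
    have hεv := hε v
    simp only [hval, towardHalf, halfValues, Set.mem_insert_iff, Set.mem_singleton_iff,
      Set.mem_Icc] at hu hv hεu hεv ⊢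
    split_ifs <;> grind

lemma add_abs_sub_half_mul_towardHalf {v : α} (h : x v ∉ halfValues) :
    x v + |x v - 1 / 2| * towardHalf x v = 1 / 2 := by
  simp only [towardHalf, if_neg h]
  split_ifs with hlt
  · rw [abs_of_neg (by linarith)]; ring
  · rw [abs_of_nonneg (by linarith)]; ring

lemma sub_mul_towardHalf_mem_halfValues {v : α} (h : x v ∉ halfValues) :
    x v - (1 / 2 - |x v - 1 / 2|) * towardHalf x v ∈ halfValues := by
  simp only [towardHalf, if_neg h]
  split_ifs with hlt
  · rw [abs_of_neg (by linarith)]; left; ring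
  · rw [abs_of_nonneg (by linarith)]; right; right; simp only [Set.mem_singleton_iff]; ring

lemma IsFracIndepSet.abs_sub_half_le (hx : G.IsFracIndepSet x) (v : α) : |x v - 1 / 2| ≤ 1 / 2 :=
  abs_sub_le_iff.2 ⟨by linarith [(hx.1 v).2], by linarith [(hx.1 v).1]⟩

-- A vertex above `1 / 2` has all its neighbours below `1 / 2`.
theorem IsFracIndepSet.isIndepSet_half_colorClass {β : Type*} (hx : G.IsFracIndepSet x)
    (C : G.Coloring β) (i : β) :
    G.IsIndepSet {v | 1 / 2 < x v ∨ (x v = 1 / 2 ∧ C v = i)} := by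
  rintro u hu v hv - huv
  have hsum := hx.2 u v huv
  rcases hu with hu | ⟨hu, rfl⟩ <;> rcases hv with hv | ⟨hv, hvc⟩
  · linarith
  · linarith
  · linarith
  · exact C.valid huv hvc.symm

lemma isFracIndepSet_of_sum_clique_le [DecidableEq α] (h01 : ∀ v, 0 ≤ x v ∧ x v ≤ 1)
    (hC : ∀ C : Finset α, G.IsClique (C : Set α) → #C ≤ 2 → ∑ v ∈ C, x v ≤ 1) :
    G.IsFracIndepSet x := by
  refine ⟨h01, fun u v huv => ?_⟩
  have hpair := hC {u, v} (by simpa using isClique_pair.2 fun _ => huv) card_le_two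
  rwa [sum_pair huv.ne] at hpair

variable [Fintype α]

open Classical in
noncomputable def nonHalfSupport (x : α → ℝ) : Finset α := univ.filter (x · ∉ halfValues)

lemma mem_nonHalfSupport {v : α} : v ∈ nonHalfSupport x ↔ x v ∉ halfValues := by
  classical
  simp [nonHalfSupport]

lemma nonHalfSupport_add_smul_towardHalf_subset (ε : ℝ) :
    nonHalfSupport (x + ε • towardHalf x) ⊆ nonHalfSupport x := by
  intro v hv
  rw [mem_nonHalfSupport] at hv ⊢
  intro h
  simp [towardHalf_of_mem h, h] at hv

lemma sum_add_smul_towardHalf (ε : ℝ) :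
    ∑ v, (x + ε • towardHalf x) v = ∑ v, x v + ε * ∑ v, towardHalf x v := by
  simp [sum_add_distrib, mul_sum]

lemma IsFracIndepSet.exists_nonHalfSupport_ssubset (hx : G.IsFracIndepSet x)
    (hne : (nonHalfSupport x).Nonempty) :
    ∃ y, G.IsFracIndepSet y ∧ ∑ v, x v ≤ ∑ v, y v ∧ nonHalfSupport y ⊂ nonHalfSupport x := by
  obtain ⟨ε, m, hm, hε, hsum, hmhalf⟩ : ∃ ε, ∃ m ∈ nonHalfSupport x,
      (∀ v, x v ∉ halfValues → ε ≤ |x v - 1 / 2| ∧ -ε ≤ 1 / 2 - |x v - 1 / 2|) ∧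
      0 ≤ ε * ∑ v, towardHalf x v ∧ x m + ε * towardHalf x m ∈ halfValues := by
    rcases le_or_gt 0 (∑ v, towardHalf x v) with hd | hd
    · obtain ⟨m, hm, hmin⟩ := exists_min_image (nonHalfSupport x) (fun v => |x v - 1 / 2|) hne
      refine ⟨_, m, hm, fun v hv => ⟨hmin v (mem_nonHalfSupport.2 hv), ?_⟩,
        mul_nonneg (abs_nonneg _) hd, ?_⟩
      · linarith [abs_nonneg (x m - 1 / 2), hx.abs_sub_half_le v]
      · rw [add_abs_sub_half_mul_towardHalf (mem_nonHalfSupport.1 hm)]; right; left; rfl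
    · obtain ⟨m, hm, hmax⟩ := exists_max_image (nonHalfSupport x) (fun v => |x v - 1 / 2|) hne
      refine ⟨-(1 / 2 - |x m - 1 / 2|), m, hm, fun v hv => ⟨?_, ?_⟩, ?_, ?_⟩
      · linarith [abs_nonneg (x v - 1 / 2), hx.abs_sub_half_le m]
      · linarith [hmax v (mem_nonHalfSupport.2 hv)]
      · nlinarith [hx.abs_sub_half_le m]
      · rw [neg_mul, ← sub_eq_add_neg]
        exact sub_mul_towardHalf_mem_halfValues (mem_nonHalfSupport.1 hm)
  refine ⟨x + ε • towardHalf x, hx.add_smul_towardHalf hε, ?_, ?_⟩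
  · rw [sum_add_smul_towardHalf]; linarith
  · refine (ssubset_iff_of_subset (nonHalfSupport_add_smul_towardHalf_subset ε)).2 ⟨m, hm, ?_⟩
    rw [mem_nonHalfSupport, not_not]
    exact hmhalf

theorem IsFracIndepSet.exists_halfValued_ge (hx : G.IsFracIndepSet x) :
    ∃ y, G.IsFracIndepSet y ∧ (∀ v, y v ∈ halfValues) ∧ ∑ v, x v ≤ ∑ v, y v := by
  induction hn : #(nonHalfSupport x) using Nat.strong_induction_on generalizing x with
  | _ n ih =>
  rcases (nonHalfSupport x).eq_empty_or_nonempty with hemp | hne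
  · refine ⟨x, hx, fun v => ?_, le_rfl⟩
    by_contra hv
    simpa [hemp] using mem_nonHalfSupport.2 hv
  · obtain ⟨y, hy, hxy, hsub⟩ := hx.exists_nonHalfSupport_ssubset hne
    obtain ⟨z, hz, hzhalf, hyz⟩ := ih _ (hn ▸ card_lt_card hsub) hy rfl
    exact ⟨z, hz, hzhalf, hxy.trans hyz⟩

theorem IsFracIndepSet.exists_isIndepSet_two_mul_sum_le {k : ℕ} (hx : G.IsFracIndepSet x)
    (hhalf : ∀ v, x v ∈ halfValues) (hk : 2 ≤ k) (C : G.Coloring (Fin k)) :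
    ∃ I : Finset α, G.IsIndepSet I ∧ 2 * ∑ v, x v ≤ k * #I := by
  classical
  let R : Fin k → α → Prop := fun i v => 1 / 2 < x v ∨ (x v = 1 / 2 ∧ C v = i)
  have hI : ∀ i, G.IsIndepSet (univ.bipartiteAbove R i : Set α) := fun i => by
    simpa [bipartiteAbove, R] using hx.isIndepSet_half_colorClass C i
  have hcount : ∀ v, 2 * x v ≤ #(univ.bipartiteBelow R v) := by
    intro v
    rcases hhalf v with h | h | h
    · simp [h]
    · have : C v ∈ univ.bipartiteBelow R v := by simp [bipartiteBelow, R, h]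
      calc 2 * x v = 1 := by rw [h]; norm_num
        _ ≤ _ := by exact_mod_cast card_pos.2 ⟨_, this⟩
    · have : univ.bipartiteBelow R v = univ := by
        ext i; norm_num [bipartiteBelow, R, Set.mem_singleton_iff.1 h]
      rw [this, card_univ, Fintype.card_fin, Set.mem_singleton_iff.1 h]
      norm_num; exact_mod_cast hk
  have : Nonempty (Fin k) := ⟨⟨0, by omega⟩⟩
  obtain ⟨i, -, hmax⟩ := exists_max_image univ (fun i => #(univ.bipartiteAbove R i)) univ_nonempty
  refine ⟨_, hI i, ?_⟩
  calc 2 * ∑ v, x v ≤ ∑ v, (#(univ.bipartiteBelow R v) : ℝ) := by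
        rw [mul_sum]; exact sum_le_sum fun v _ => hcount v
    _ = ∑ j, (#(univ.bipartiteAbove R j) : ℝ) := by
        exact_mod_cast (sum_card_bipartiteAbove_eq_sum_card_bipartiteBelow R).symm
    _ ≤ k * #(univ.bipartiteAbove R i) := by
        have := sum_le_card_nsmul univ _ _ fun j _ => hmax j (mem_univ j)
        simp only [card_univ, Fintype.card_fin, smul_eq_mul] at this
        exact_mod_cast this

end SimpleGraph

theorem card_le_alphaNum {W : Type} [Fintype W] {G : SimpleGraph W} {S : Finset W}
    (hS : G.IsIndepSet S) : #S ≤ alphaNum G :=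
  le_csSup ⟨Fintype.card W, by rintro _ ⟨T, -, rfl⟩; exact T.card_le_univ⟩ ⟨S, hS, rfl⟩

/-- For `k`-colorable `G` (`k ≥ 2`), `α(G) ≥ (2/k)·α_{F2}(G)`. -/
theorem stmt3 (G : SimpleGraph V) (k : ℕ) (hk : 2 ≤ k) (h : G.Colorable k) :
    (2 / (k : ℝ)) * alphaF G 2 ≤ (alphaNum G : ℝ) := by
  have hk0 : (0 : ℝ) < k := by positivity
  suffices alphaF G 2 ≤ k / 2 * alphaNum G by
    calc 2 / (k : ℝ) * alphaF G 2 ≤ 2 / k * (k / 2 * alphaNum G) := by gcongr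
      _ = alphaNum G := by field_simp
  refine Real.sSup_le ?_ (by positivity)
  rintro _ ⟨x, h01, hclique, rfl⟩
  obtain ⟨y, hy, hyhalf, hxy⟩ :=
    (SimpleGraph.isFracIndepSet_of_sum_clique_le h01 hclique).exists_halfValued_ge
  obtain ⟨I, hI, hIy⟩ := hy.exists_isIndepSet_two_mul_sum_le hyhalf hk h.some
  have hIα : (#I : ℝ) ≤ alphaNum G := by exact_mod_cast card_le_alphaNum hI
  calc ∑ v, x v ≤ ∑ v, y v := hxy
    _ ≤ k / 2 * #I := by linarith
    _ ≤ k / 2 * alphaNum G := by gcongr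
end

section
/- For any finite simple graph G with n vertices and e edges, the maximum independent set satisfies α(G) ≥ n² / (2e + n) (Turán's theorem, independent set form). -/
/-!
Caro–Wei, then Cauchy–Schwarz. Greedily put a vertex `v` of minimum degree into the independent
set and delete its closed neighbourhood: the deleted vertices carry weights `1 / (d(u) + 1)`
summing to at most `1`, so `α(G) ≥ ∑ᵥ 1 / (d(v) + 1)`. Finally
`n² ≤ (∑ᵥ (d(v) + 1)) (∑ᵥ 1 / (d(v) + 1)) = (2e + n) ∑ᵥ 1 / (d(v) + 1)`.
-/

open Finset

variable {V : Type} [Fintype V] [DecidableEq V]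

theorem Finset.card_sq_le_sum_mul_sum_inv {ι R : Type*} [Field R] [LinearOrder R]
    [IsStrictOrderedRing R] (s : Finset ι) {f : ι → R} (hf : ∀ i ∈ s, 0 < f i) :
    (#s : R) ^ 2 ≤ (∑ i ∈ s, f i) * ∑ i ∈ s, (f i)⁻¹ := by
  simpa using Finset.sum_sq_le_sum_mul_sum_of_sq_le_mul s (r := fun _ => (1 : R))
    (fun i hi => (hf i hi).le) (fun i hi => (inv_pos.2 (hf i hi)).le)
    (fun i hi => by simp [(hf i hi).ne'])

theorem alphaNum_eq_indepNum {W : Type} (G : SimpleGraph W) : alphaNum G = G.indepNum := by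
  simp only [alphaNum, SimpleGraph.indepNum, SimpleGraph.isNIndepSet_iff,
    SimpleGraph.isIndepSet_iff]

namespace SimpleGraph

variable {α : Type*} [Fintype α] (G : SimpleGraph α) [DecidableRel G.Adj]

theorem sum_degree_add_one :
    ∑ v, ((G.degree v : ℝ) + 1) = 2 * #G.edgeFinset + Fintype.card α := by
  rw [sum_add_distrib, ← Nat.cast_sum, sum_degrees_eq_twice_card_edges]
  simp

theorem sum_inter_closedNbhd_inv_degree_le_one [DecidableEq α] {s : Finset α} {v : α}
    (hv : ∀ u ∈ s, G.degree v ≤ G.degree u) :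
    ∑ u ∈ s ∩ insert v (G.neighborFinset v), ((G.degree u : ℝ) + 1)⁻¹ ≤ 1 := by
  set N := s ∩ insert v (G.neighborFinset v)
  have hterm : ∀ u ∈ N, ((G.degree u : ℝ) + 1)⁻¹ ≤ ((G.degree v : ℝ) + 1)⁻¹ := fun u hu => by
    gcongr; exact hv u (mem_inter.1 hu).1
  have hcard : #N ≤ G.degree v + 1 :=
    (card_le_card inter_subset_right).trans <|
      (card_insert_le _ _).trans_eq (by rw [card_neighborFinset_eq_degree])
  calc ∑ u ∈ N, ((G.degree u : ℝ) + 1)⁻¹ ≤ #N * ((G.degree v : ℝ) + 1)⁻¹ := by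
        simpa using sum_le_card_nsmul N _ _ hterm
    _ ≤ ((G.degree v : ℝ) + 1) * ((G.degree v : ℝ) + 1)⁻¹ := by gcongr; exact_mod_cast hcard
    _ = 1 := mul_inv_cancel₀ (by positivity)

theorem exists_isIndepSet_subset_sum_inv_degree_le (s : Finset α) :
    ∃ t ⊆ s, G.IsIndepSet (t : Set α) ∧ ∑ v ∈ s, ((G.degree v : ℝ) + 1)⁻¹ ≤ #t := by
  classical
  induction s using Finset.strongInduction with
  | H s ih =>
  rcases s.eq_empty_or_nonempty with rfl | hs
  · exact ⟨∅, subset_refl _, by simp, by simp⟩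
  obtain ⟨v, hvs, hv⟩ := s.exists_min_image (fun u => G.degree u) hs
  set N := insert v (G.neighborFinset v)
  obtain ⟨t, hts, ht, hsum⟩ :=
    ih (s \ N) ((ssubset_iff_of_subset sdiff_subset).2 ⟨v, hvs, by simp [N]⟩)
  have hvt : v ∉ t := fun h => (mem_sdiff.1 (hts h)).2 (mem_insert_self _ _)
  refine ⟨insert v t, insert_subset hvs (hts.trans sdiff_subset), ?_, ?_⟩
  · have hnadj : ∀ u ∈ t, ¬G.Adj v u := fun u hu hvu =>
      (mem_sdiff.1 (hts hu)).2 (mem_insert_of_mem ((G.mem_neighborFinset v u).2 hvu))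
    rw [coe_insert, isIndepSet_iff, Set.pairwise_insert]
    exact ⟨ht, fun u hu _ => ⟨hnadj u hu, fun huv => hnadj u hu huv.symm⟩⟩
  · calc ∑ u ∈ s, ((G.degree u : ℝ) + 1)⁻¹
        = ∑ u ∈ s ∩ N, ((G.degree u : ℝ) + 1)⁻¹ + ∑ u ∈ s \ N, ((G.degree u : ℝ) + 1)⁻¹ :=
          (sum_inter_add_sum_sdiff _ _ _).symm
      _ ≤ 1 + #t := add_le_add (G.sum_inter_closedNbhd_inv_degree_le_one hv) hsum
      _ = #(insert v t) := by rw [card_insert_of_notMem hvt]; push_cast; ring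

theorem sum_inv_degree_add_one_le_indepNum :
    ∑ v, ((G.degree v : ℝ) + 1)⁻¹ ≤ G.indepNum := by
  obtain ⟨t, -, ht, hsum⟩ := G.exists_isIndepSet_subset_sum_inv_degree_le univ
  exact hsum.trans (by exact_mod_cast ht.card_le_indepNum)

theorem card_sq_div_le_indepNum :
    (Fintype.card α : ℝ) ^ 2 / (2 * #G.edgeFinset + Fintype.card α) ≤ G.indepNum := by
  refine div_le_of_le_mul₀ (by positivity) (by positivity) ?_
  calc (Fintype.card α : ℝ) ^ 2
      ≤ (∑ v, ((G.degree v : ℝ) + 1)) * ∑ v, ((G.degree v : ℝ) + 1)⁻¹ :=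
        card_sq_le_sum_mul_sum_inv univ fun v _ => by positivity
    _ ≤ (2 * #G.edgeFinset + Fintype.card α) * G.indepNum := by
        rw [sum_degree_add_one]; gcongr; exact G.sum_inv_degree_add_one_le_indepNum
    _ = G.indepNum * (2 * #G.edgeFinset + Fintype.card α) := mul_comm _ _

end SimpleGraph

theorem stmt5_general (G : SimpleGraph V) [DecidableRel G.Adj] :
    ((Fintype.card V : ℝ)) ^ 2 / (2 * G.edgeFinset.card + Fintype.card V)
      ≤ (alphaNum G : ℝ) :=
  alphaNum_eq_indepNum G ▸ G.card_sq_div_le_indepNum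

/-- Turán-type bound: `α(G) ≥ n² / (2e + n)`. -/
theorem stmt5 (G : SimpleGraph V) [DecidableRel G.Adj] (hn : 1 ≤ Fintype.card V) :
    ((Fintype.card V : ℝ)) ^ 2 / (2 * G.edgeFinset.card + Fintype.card V)
      ≤ (alphaNum G : ℝ) :=
  stmt5_general G
end

section
/- If G is a k-colorable graph (k ≥ 2), then FCC(G)/Ind(G) ≤ k/2, i.e., the fractional clique cover is a (k/2)-approximation of the index coding broadcast rate. -/
/-!
An independent set `S` forces `q ^ #S` distinct broadcasts, since its receivers have no side
information about each other, so `α(G) ≤ Ind(G)`.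

Conversely, fix a proper `k`-colouring. Two colour classes span a bipartite graph, which by
König's theorem is covered by at most `α(G)` edges and single vertices. Each vertex lies in
`k - 1` of the `k (k - 1) / 2` pairs of colour classes, so averaging these covers with weight
`1 / (k - 1)` gives a fractional clique cover of value at most `(k / 2) α(G)`.
-/

open Finset

variable {V : Type} [Fintype V] [DecidableEq V]

def IsIndexCode {W : Type*} (G : SimpleGraph W) (q l : ℕ) (f : (W → Fin q) → Fin l → Fin q) :
    Prop :=
  ∀ v : W, ∃ g : (Fin l → Fin q) → ({u : W // G.Adj v u} → Fin q) → Fin q,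
    ∀ p : W → Fin q, g (f p) (fun u => p u.1) = p v

namespace IsIndexCode

variable {W : Type*} {G : SimpleGraph W} {q l : ℕ} {f : (W → Fin q) → Fin l → Fin q}

lemma apply_eq_of_encode_eq (hf : IsIndexCode G q l f) {p₁ p₂ : W → Fin q} (v : W)
    (henc : f p₁ = f p₂) (hside : ∀ u, G.Adj v u → p₁ u = p₂ u) : p₁ v = p₂ v := by
  obtain ⟨g, hg⟩ := hf v
  rw [← hg p₁, ← hg p₂, henc]
  congr 1
  exact funext fun u => hside u u.2

lemma card_le [Finite W] (hf : IsIndexCode G q l f) (hq : 1 < q) {S : Finset W}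
    (hS : G.IsIndepSet S) : #S ≤ l := by
  classical
  let extend : (S → Fin q) → W → Fin q :=
    fun σ v => if h : v ∈ S then σ ⟨v, h⟩ else ⟨0, by omega⟩
  have hinj : Function.Injective (f ∘ extend) := by
    intro σ₁ σ₂ henc
    funext v
    have hside : ∀ u, G.Adj v u → extend σ₁ u = extend σ₂ u := fun u hvu => by
      have hu : u ∉ S := fun hu => hS v.2 hu (G.ne_of_adj hvu) hvu
      simp [extend, hu]
    simpa [extend] using hf.apply_eq_of_encode_eq v henc hside
  have hcard := Fintype.card_le_of_injective _ hinj
  simp only [Fintype.card_fun, Fintype.card_coe, Fintype.card_fin] at hcard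
  exact (Nat.pow_le_pow_iff_right hq).mp hcard

end IsIndexCode

lemma isIndexCode_uncoded {W : Type*} [Fintype W] (G : SimpleGraph W) (q : ℕ) :
    IsIndexCode G q (Fintype.card W) fun p i => p ((Fintype.equivFin W).symm i) :=
  fun v => ⟨fun b _ => b (Fintype.equivFin W v), fun p => by simp⟩

lemma indepNum_le_IndQ {W : Type} [Fintype W] (G : SimpleGraph W) {q : ℕ} (hq : 1 < q) :
    G.indepNum ≤ IndQ G q := by
  obtain ⟨S, hS⟩ := G.exists_isNIndepSet_indepNum
  obtain ⟨f, hf⟩ : ∃ f, IsIndexCode G q (IndQ G q) f :=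
    Nat.sInf_mem (s := {l | ∃ f, IsIndexCode G q l f}) ⟨_, _, isIndexCode_uncoded G q⟩
  exact hS.card_eq ▸ hf.card_le hq hS.isIndepSet

lemma indepNum_le_Ind {W : Type} [Fintype W] (G : SimpleGraph W) :
    (G.indepNum : ℝ) ≤ Ind G := by
  refine le_csInf ⟨_, 2, le_rfl, rfl⟩ ?_
  rintro _ ⟨q, hq, rfl⟩
  exact mod_cast indepNum_le_IndQ G hq

/-- Hall's theorem with deficiency `d`: the `d` dummy targets `Sum.inr` absorb the deficiency. -/
theorem Finset.exists_injective_sum_of_card_le_card_biUnion_add {ι α : Type*} [DecidableEq α]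
    (t : ι → Finset α) (d : ℕ) (h : ∀ s : Finset ι, #s ≤ #(s.biUnion t) + d) :
    ∃ f : ι → α ⊕ Fin d, Function.Injective f ∧ ∀ i a, f i = .inl a → a ∈ t i := by
  obtain ⟨f, hf, hft⟩ := (all_card_le_biUnion_card_iff_exists_injective
      fun i => (t i).disjSum (univ : Finset (Fin d))).mp fun s => by
    rcases s.eq_empty_or_nonempty with rfl | ⟨i, hi⟩
    · simp
    calc #s ≤ #((s.biUnion t).disjSum univ) := by simpa using h s
      _ ≤ _ := card_le_card fun x hx => by
        rcases x with a | b
        · simpa using hx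
        · simpa using ⟨i, hi⟩
  exact ⟨f, hf, fun i a hia => by simpa [hia] using hft i⟩

def IsCliqueCover {W : Type*} (G : SimpleGraph W) (S : Finset W) (F : Finset (Finset W)) : Prop :=
  (∀ C ∈ F, G.IsClique (C : Set W) ∧ C.Nonempty ∧ C ⊆ S) ∧ ∀ v ∈ S, ∃ C ∈ F, v ∈ C

section CliqueCover

variable {W : Type*} [DecidableEq W] {G : SimpleGraph W}

/-- The cover consists of the matched pairs `{x, y}` and singletons for the unmatched vertices. -/
lemma exists_isCliqueCover_card_le_of_injective_sum {X Y : Finset W} {d : ℕ}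
    (f : X → W ⊕ Fin d) (hf : Function.Injective f)
    (hfY : ∀ x y, f x = .inl y → y ∈ Y ∧ G.Adj x y) :
    ∃ F, IsCliqueCover G (X ∪ Y) F ∧ #F ≤ #Y + d := by
  classical
  let M : Finset W := {y ∈ Y | ∃ x, f x = .inl y}
  let edge : X → Finset W := fun x => Sum.elim (fun y => {x.1, y}) (fun _ => {x.1}) (f x)
  have hM : #X ≤ #M + d := by
    have hmaps : Set.MapsTo f (univ : Finset X) (M.disjSum (univ : Finset (Fin d))) := by
      intro x _
      rcases hfx : f x with y | i
      · simpa [M] using ⟨(hfY x y hfx).1, x, x.2, hfx⟩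
      · simp
    simpa using card_le_card_of_injOn f hmaps hf.injOn
  refine ⟨univ.image edge ∪ (Y \ M).image singleton, ⟨?_, ?_⟩, ?_⟩
  · simp only [mem_union, mem_image, mem_univ, true_and]
    rintro C (⟨x, rfl⟩ | ⟨y, hy, rfl⟩)
    · rcases hfx : f x with y | i
      · obtain ⟨hyY, hxy⟩ := hfY x y hfx
        simp only [edge, hfx, Sum.elim_inl, coe_pair, SimpleGraph.isClique_pair]
        exact ⟨fun _ => hxy, insert_nonempty _ _,
          insert_subset (mem_union_left _ x.2) (singleton_subset_iff.2 (mem_union_right _ hyY))⟩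
      · simp [edge, hfx, x.2]
    · simp [(mem_sdiff.1 hy).1]
  · have mem_edge : ∀ x : X, x.1 ∈ edge x := fun x => by
      rcases hfx : f x with y | i <;> simp [edge, hfx]
    intro v hv
    rcases mem_union.1 hv with hvX | hvY
    · exact ⟨edge ⟨v, hvX⟩, mem_union_left _ (mem_image_of_mem _ (mem_univ _)), mem_edge _⟩
    by_cases hvM : v ∈ M
    · obtain ⟨x, hx⟩ := (mem_filter.1 hvM).2
      exact ⟨edge x, mem_union_left _ (mem_image_of_mem _ (mem_univ _)), by simp [edge, hx]⟩
    · exact ⟨{v}, mem_union_right _ (mem_image_of_mem _ (mem_sdiff.2 ⟨hvY, hvM⟩)),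
        mem_singleton_self v⟩
  · have hMY : M ⊆ Y := filter_subset _ _
    have := card_le_card hMY
    grw [card_union_le, card_image_le, card_image_le, card_sdiff_of_subset hMY]
    simp only [card_univ, Fintype.card_coe]
    omega

lemma card_add_card_le_indepNum_add_card_biUnion [Fintype W] [DecidableRel G.Adj]
    {B Y : Finset W} (hB : G.IsIndepSet B) (hY : G.IsIndepSet Y) (hBY : Disjoint B Y) :
    #B + #Y ≤ G.indepNum + #(B.biUnion fun b => {y ∈ Y | G.Adj b y}) := by
  set N := B.biUnion fun b => {y ∈ Y | G.Adj b y}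
  have hNY : N ⊆ Y := biUnion_subset.2 fun _ _ => filter_subset _ _
  have hindep : G.IsIndepSet ↑(B ∪ (Y \ N)) := by
    rw [coe_union, SimpleGraph.IsIndepSet, Set.pairwise_union]
    refine ⟨hB, hY.mono (by simp), fun b hb y hy _ => ?_⟩
    simp only [mem_coe, mem_sdiff] at hb hy
    have hby : ¬ G.Adj b y := fun hby => hy.2 (mem_biUnion.2 ⟨b, hb, mem_filter.2 ⟨hy.1, hby⟩⟩)
    exact ⟨hby, fun hyb => hby hyb.symm⟩
  have hcard := hindep.card_le_indepNum
  rw [card_union_of_disjoint (hBY.mono_right sdiff_subset), card_sdiff_of_subset hNY] at hcard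
  have := card_le_card hNY
  omega

/-- König's theorem, in the form: the vertices of a bipartite graph are covered by at most `α`
edges and single vertices. -/
theorem exists_isCliqueCover_union_card_le_indepNum [Fintype W] {X Y : Finset W}
    (hX : G.IsIndepSet X) (hY : G.IsIndepSet Y) (hXY : Disjoint X Y) :
    ∃ F, IsCliqueCover G (X ∪ Y) F ∧ #F ≤ G.indepNum := by
  classical
  have hdef (B : Finset W) (hB : B ⊆ X) :
      #B + #Y ≤ G.indepNum + #(B.biUnion fun b => {y ∈ Y | G.Adj b y}) :=
    card_add_card_le_indepNum_add_card_biUnion (hX.mono (coe_subset.2 hB)) hY (hXY.mono_left hB)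
  obtain ⟨f, hf, hfY⟩ := exists_injective_sum_of_card_le_card_biUnion_add
      (fun x : X => {y ∈ Y | G.Adj x y}) (G.indepNum - #Y) fun s => by
    have := hdef (s.image Subtype.val) fun _ hx => by
      obtain ⟨x, -, rfl⟩ := mem_image.1 hx
      exact x.2
    rw [card_image_of_injective _ Subtype.val_injective, image_biUnion] at this
    omega
  obtain ⟨F, hF, hcard⟩ :=
    exists_isCliqueCover_card_le_of_injective_sum f hf fun x y h => by simpa using hfY x y h
  have := hdef ∅ (empty_subset _)
  simp only [card_empty, biUnion_empty, zero_add, add_zero] at this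
  exact ⟨F, hF, by omega⟩

end CliqueCover

lemma FCC_le_sum (G : SimpleGraph V) (y : Finset V → ℝ) (hy : ∀ C, 0 ≤ y C ∧ y C ≤ 1)
    (hclique : ∀ C : Finset V, ¬ G.IsClique (C : Set V) → y C = 0)
    (hcover : ∀ v : V, 1 ≤ ∑ C : Finset V, if v ∈ C then y C else 0) :
    FCC G ≤ ∑ C : Finset V, y C := by
  refine csInf_le ⟨0, ?_⟩ ⟨y, hy, hclique, hcover, rfl⟩
  rintro _ ⟨y', hy', -, -, rfl⟩
  exact sum_nonneg fun C _ => (hy' C).1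

/-- Each clique gets weight (number of covers `F e` containing it) / `r`. -/
theorem FCC_le_of_isCliqueCover {ι : Type*} (G : SimpleGraph V) (E : Finset ι)
    (S : ι → Finset V) (F : ι → Finset (Finset V)) (hF : ∀ e ∈ E, IsCliqueCover G (S e) (F e))
    {r : ℕ} (hr : 0 < r) (hS : ∀ v, #{e ∈ E | v ∈ S e} = r) :
    FCC G ≤ (∑ e ∈ E, #(F e) : ℕ) / r := by
  classical
  let m : Finset V → ℕ := fun C => #{e ∈ E | C ∈ F e}
  have hm_le (C : Finset V) : m C ≤ r := by
    rcases Finset.eq_empty_or_nonempty {e ∈ E | C ∈ F e} with h | ⟨e, he⟩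
    · simp [m, h]
    obtain ⟨he, hCe⟩ := mem_filter.1 he
    obtain ⟨v, hv⟩ := ((hF e he).1 C hCe).2.1
    rw [← hS v]
    refine card_le_card fun e' he' => ?_
    obtain ⟨he', hCe'⟩ := mem_filter.1 he'
    exact mem_filter.2 ⟨he', ((hF e' he').1 C hCe').2.2 hv⟩
  have hm_clique (C : Finset V) (hC : ¬ G.IsClique (C : Set V)) : m C = 0 := by
    exact card_eq_zero.2 (filter_eq_empty_iff.2 fun e he hCe => hC ((hF e he).1 C hCe).1)
  have hm_eq (C : Finset V) : m C = #(bipartiteAbove (fun C e => C ∈ F e) E C) := rfl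
  have hm_cover (v : V) : r ≤ ∑ C ∈ {C | v ∈ C}, m C := by
    rw [sum_congr rfl fun C _ => hm_eq C, sum_card_bipartiteAbove_eq_sum_card_bipartiteBelow,
      ← hS v, card_filter]
    refine sum_le_sum fun e he => ?_
    split_ifs with hv
    · obtain ⟨C, hCe, hvC⟩ := (hF e he).2 v hv
      exact card_pos.2 ⟨C, by simp [bipartiteBelow, hCe, hvC]⟩
    · exact Nat.zero_le _
  have hm_sum : ∑ C, m C = ∑ e ∈ E, #(F e) := by
    rw [sum_congr rfl fun C _ => hm_eq C, sum_card_bipartiteAbove_eq_sum_card_bipartiteBelow]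
    refine sum_congr rfl fun e _ => ?_
    simp [bipartiteBelow]
  have hr' : (0 : ℝ) < r := Nat.cast_pos.2 hr
  calc FCC G ≤ ∑ C, (m C : ℝ) / r := by
        refine FCC_le_sum G _ (fun C => ⟨by positivity, ?_⟩) (fun C hC => by simp [hm_clique C hC])
          fun v => ?_
        · exact (div_le_one hr').2 (mod_cast hm_le C)
        · rw [← sum_filter, ← sum_div, le_div_iff₀ hr', one_mul]
          exact_mod_cast hm_cover v
    _ = (∑ e ∈ E, #(F e) : ℕ) / r := by rw [← sum_div, ← hm_sum, Nat.cast_sum]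

lemma exists_isCliqueCover_colorPair {W : Type*} [Fintype W] [DecidableEq W] {G : SimpleGraph W}
    {k : ℕ} (c : G.Coloring (Fin k)) {e : Sym2 (Fin k)} (he : ¬ e.IsDiag) :
    ∃ F, IsCliqueCover G {v | c v ∈ e} F ∧ #F ≤ G.indepNum := by
  induction e using Sym2.ind with | h i j => ?_
  have hclass (a : Fin k) : G.IsIndepSet ({v | c v = a} : Finset W) := fun u hu v hv _ huv => by
    rw [mem_coe, mem_filter] at hu hv
    exact c.valid huv (hu.2.trans hv.2.symm)
  have hdisj : Disjoint ({v | c v = i} : Finset W) ({v | c v = j} : Finset W) :=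
    disjoint_filter.2 fun _ _ hi hj => he (Sym2.mk_isDiag_iff.2 (hi.symm.trans hj))
  simpa only [Sym2.mem_iff, filter_or] using
    exists_isCliqueCover_union_card_le_indepNum (hclass i) (hclass j) hdisj

theorem FCC_le_mul_indepNum_of_colorable (G : SimpleGraph V) {k : ℕ} (hk : 2 ≤ k)
    (hG : G.Colorable k) : FCC G ≤ k / 2 * G.indepNum := by
  obtain ⟨c⟩ := hG
  have hcover (e : Sym2 (Fin k)) : ∃ F, e ∈ (⊤ : SimpleGraph (Fin k)).edgeFinset →
      IsCliqueCover G {v | c v ∈ e} F ∧ #F ≤ G.indepNum := by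
    by_cases he : e.IsDiag
    · exact ⟨∅, fun h => absurd he (by simpa using h)⟩
    · obtain ⟨F, hF⟩ := exists_isCliqueCover_colorPair c he
      exact ⟨F, fun _ => hF⟩
  choose F hF using hcover
  have hdeg (v : V) :
      #{e ∈ (⊤ : SimpleGraph (Fin k)).edgeFinset | v ∈ ({v | c v ∈ e} : Finset V)} = k - 1 := by
    simp only [mem_filter, mem_univ, true_and]
    rw [← SimpleGraph.incidenceFinset_eq_filter, SimpleGraph.card_incidenceFinset_eq_degree,
      SimpleGraph.complete_graph_degree, Fintype.card_fin]
  calc FCC G ≤ (∑ e ∈ (⊤ : SimpleGraph (Fin k)).edgeFinset, #(F e) : ℕ) / (k - 1 : ℕ) :=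
        FCC_le_of_isCliqueCover G _ _ F (fun e he => (hF e he).1) (by omega) hdeg
    _ ≤ (k.choose 2 * G.indepNum : ℕ) / (k - 1 : ℕ) := by
        gcongr
        have hE : #(⊤ : SimpleGraph (Fin k)).edgeFinset = k.choose 2 := by
          simpa using SimpleGraph.card_edgeFinset_top_eq_card_choose_two (V := Fin k)
        rw [← hE, ← smul_eq_mul]
        exact sum_le_card_nsmul _ _ _ fun e he => (hF e he).2
    _ = k / 2 * G.indepNum := by
        have hk1 : (k : ℝ) - 1 ≠ 0 := by
          have : (2 : ℝ) ≤ k := mod_cast hk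
          linarith
        push_cast [Nat.cast_choose_two, Nat.cast_sub (by omega : 1 ≤ k)]
        field_simp

/-- For `k`-colorable `G` (`k ≥ 2`), the fractional clique cover is a
`k/2`-approximation of the index coding broadcast rate. -/
theorem stmt11 (G : SimpleGraph V) (k : ℕ) (hk : 2 ≤ k) (h : G.Colorable k) :
    FCC G / Ind G ≤ (k : ℝ) / 2 := by
  have hα := indepNum_le_Ind G
  refine div_le_of_le_mul₀ ((Nat.cast_nonneg _).trans hα) (by positivity) ?_
  calc FCC G ≤ k / 2 * G.indepNum := FCC_le_mul_indepNum_of_colorable G hk h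
    _ ≤ k / 2 * Ind G := by gcongr
end
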